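/- Let w be a string and suppose positions a' ≤ d_A, b' ≤ d_B are such that w[a', d_A − 1] and w[b', d_B − 1] both have period p, both have length at least p, neither w[a', d_A] nor w[b', d_B] has period p, and LCE(a', b') ≥ p. Then LCE(a',b') = min(d_A − a', d_B − b') if d_A − a' ≠ d_B − b', and LCE(a',b') = (d_A − a') + LCE(d_A, d_B) otherwise. -/
import Mathlib


def lcp {α : Type*} [DecidableEq α] : List α → List α → ℕ
  | a :: u, b :: v => if a = b then lcp u v + 1 else 0
  | _, _ => 0

def LCE {α : Type*} [DecidableEq α] (w : List α) (i j : ℕ) : ℕ :=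
  lcp (w.drop i) (w.drop j)

def HasPeriod {α : Type*} (u : List α) (p : ℕ) : Prop :=
  0 < p ∧ ∀ k, k + p < u.length → u[k]? = u[k + p]?

section Aux
variable {α : Type*} [DecidableEq α]

lemma lcp_comm : ∀ (u v : List α), lcp u v = lcp v u
  | [], [] => rfl
  | [], _ :: _ => rfl
  | _ :: _, [] => rfl
  | a :: u, b :: v => by
      simp only [lcp]
      rcases eq_or_ne a b with h | h
      · subst h; simp [lcp_comm u v]
      · simp [h, Ne.symm h]

lemma take_eq_of_le_lcp : ∀ (m : ℕ) (u v : List α), m ≤ lcp u v →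
    u.take m = v.take m ∧ m ≤ u.length ∧ m ≤ v.length := by
  intro m
  induction m with
  | zero => intro u v _; simp
  | succ m ih =>
    intro u v h
    match u, v with
    | [], _ => simp [lcp] at h
    | _ :: _, [] => simp [lcp] at h
    | a :: u, b :: v =>
      simp only [lcp] at h
      by_cases hab : a = b
      · rw [if_pos hab] at h
        obtain ⟨h1, h2, h3⟩ := ih u v (by omega)
        subst hab
        simp [List.take_succ_cons, h1, Nat.succ_le_succ h2, Nat.succ_le_succ h3]
      · rw [if_neg hab] at h; omega

lemma getElem?_eq_of_lt_lcp {u v : List α} {k : ℕ} (h : k < lcp u v) :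
    u[k]? = v[k]? := by
  obtain ⟨h1, h2, h3⟩ := take_eq_of_le_lcp (k + 1) u v h
  have := congrArg (fun l => l[k]?) h1
  simpa [List.getElem?_take, Nat.lt_succ_self] using this

lemma lcp_eq_add : ∀ (m : ℕ) (u v : List α), m ≤ u.length → u.take m = v.take m →
    lcp u v = m + lcp (u.drop m) (v.drop m) := by
  intro m
  induction m with
  | zero => intro u v _ _; simp
  | succ m ih =>
    intro u v hlen htake
    match u with
    | [] => simp at hlen
    | a :: u =>
      match v with
      | [] => simp at htake
      | b :: v =>
        simp only [List.take_succ_cons, List.cons.injEq] at htake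
        obtain ⟨rfl, htake⟩ := htake
        simp only [lcp, List.drop_succ_cons]
        rw [if_pos trivial, ih u v (by simpa using hlen) htake]
        omega

lemma lcp_eq_zero {u v : List α} (h : u[0]? ≠ v[0]?) : lcp u v = 0 := by
  match u, v with
  | [], _ => rfl
  | _ :: _, [] => rfl
  | a :: u, b :: v =>
    have hab : a ≠ b := fun e => h (by simp [e])
    simp [lcp, hab]

lemma agree (u v : List α) (p m n : ℕ) (hp : 0 < p) (hlce : p ≤ lcp u v)
    (hu : ∀ k, k + p < m → u[k]? = u[k + p]?)
    (hv : ∀ k, k + p < n → v[k]? = v[k + p]?) :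
    ∀ k, k < m → k < n → u[k]? = v[k]? := by
  intro k
  induction k using Nat.strong_induction_on with
  | _ k ih =>
    intro hkm hkn
    rcases lt_or_ge k p with h | h
    · exact getElem?_eq_of_lt_lcp (lt_of_lt_of_le h hlce)
    · have h1 := hu (k - p) (by omega)
      have h2 := hv (k - p) (by omega)
      rw [Nat.sub_add_cancel h] at h1 h2
      rw [← h1, ← h2]
      exact ih (k - p) (by omega) (by omega) (by omega)

lemma take_eq_of_agree {u v : List α} {m : ℕ} (hmu : m ≤ u.length) (hmv : m ≤ v.length)
    (h : ∀ k, k < m → u[k]? = v[k]?) : u.take m = v.take m := by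
  apply List.ext_getElem?
  intro k
  rw [List.getElem?_take, List.getElem?_take]
  by_cases hk : k < m
  · simp [hk, h k hk]
  · simp [hk]

lemma lcp_lt_case (u v : List α) (p m n : ℕ) (hp : 0 < p) (hpm : p ≤ m) (hmn : m < n)
    (hmu : m < u.length) (hnv : n ≤ v.length)
    (hu : ∀ k, k + p < m → u[k]? = u[k + p]?)
    (hv : ∀ k, k + p < n → v[k]? = v[k + p]?)
    (hA : u[m - p]? ≠ u[m]?)
    (hlce : p ≤ lcp u v) : lcp u v = m := by
  have hag := agree u v p m n hp hlce hu hv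
  have htake : u.take m = v.take m :=
    take_eq_of_agree hmu.le (by omega) (fun k hk => hag k hk (by omega))
  rw [lcp_eq_add m u v hmu.le htake]
  have h0 : (u.drop m)[0]? ≠ (v.drop m)[0]? := by
    simp only [List.getElem?_drop, Nat.add_zero]
    have hvm : v[m]? = v[m - p]? := by
      have := hv (m - p) (by omega)
      rw [Nat.sub_add_cancel hpm] at this
      exact this.symm
    rw [hvm, ← hag (m - p) (by omega) (by omega)]
    exact fun h => hA h.symm
  rw [lcp_eq_zero h0]
  omega

end Aux

theorem full_state_lce {α : Type*} [DecidableEq α] (w : List α)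
    (a' b' dA dB p : ℕ) (haA : a' ≤ dA) (hbB : b' ≤ dB)
    (hdA : dA < w.length) (hdB : dB < w.length)
    (hpA : HasPeriod ((w.drop a').take (dA - a')) p)
    (hpB : HasPeriod ((w.drop b').take (dB - b')) p)
    (hlA : p ≤ dA - a') (hlB : p ≤ dB - b')
    (hnA : ¬ HasPeriod ((w.drop a').take (dA - a' + 1)) p)
    (hnB : ¬ HasPeriod ((w.drop b').take (dB - b' + 1)) p)
    (hlce : LCE w a' b' ≥ p) :
    (dA - a' ≠ dB - b' → LCE w a' b' = min (dA - a') (dB - b')) ∧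
    (dA - a' = dB - b' → LCE w a' b' = (dA - a') + LCE w dA dB) := by
  obtain ⟨hp, hpA2⟩ := hpA
  obtain ⟨-, hpB2⟩ := hpB
  set u := w.drop a' with hu_def
  set v := w.drop b' with hv_def
  set m := dA - a' with hm_def
  set n := dB - b' with hn_def
  have hlu : u.length = w.length - a' := by simp [hu_def]
  have hlv : v.length = w.length - b' := by simp [hv_def]
  have hmu : m < u.length := by omega
  have hnv : n < v.length := by omega
  -- periodicity in getElem? form
  have hu : ∀ k, k + p < m → u[k]? = u[k + p]? := by
    intro k hk
    have := hpA2 k (by rw [List.length_take]; omega)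
    rwa [List.getElem?_take, List.getElem?_take, if_pos (by omega), if_pos (by omega)] at this
  have hv : ∀ k, k + p < n → v[k]? = v[k + p]? := by
    intro k hk
    have := hpB2 k (by rw [List.length_take]; omega)
    rwa [List.getElem?_take, List.getElem?_take, if_pos (by omega), if_pos (by omega)] at this
  -- non-extendability
  have hA : u[m - p]? ≠ u[m]? := by
    intro h
    apply hnA
    refine ⟨hp, ?_⟩
    intro k hk
    rw [List.length_take] at hk
    have hk' : k + p < m + 1 := by omega
    rw [List.getElem?_take, List.getElem?_take, if_pos (by omega), if_pos (by omega)]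
    rcases lt_or_eq_of_le (Nat.lt_succ_iff.mp hk') with h2 | h2
    · exact hu k h2
    · rw [show k + p = m from h2, show k = m - p from by omega]
      exact h
  have hB : v[n - p]? ≠ v[n]? := by
    intro h
    apply hnB
    refine ⟨hp, ?_⟩
    intro k hk
    rw [List.length_take] at hk
    have hk' : k + p < n + 1 := by omega
    rw [List.getElem?_take, List.getElem?_take, if_pos (by omega), if_pos (by omega)]
    rcases lt_or_eq_of_le (Nat.lt_succ_iff.mp hk') with h2 | h2
    · exact hv k h2
    · rw [show k + p = n from h2, show k = n - p from by omega]
      exact h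
  have hlce' : p ≤ lcp u v := hlce
  constructor
  · intro hne
    rcases lt_or_gt_of_ne hne with hlt | hgt
    · rw [min_eq_left hlt.le]
      exact lcp_lt_case u v p m n hp hlA hlt hmu hnv.le hu hv hA hlce'
    · rw [min_eq_right hgt.le]
      show lcp u v = n
      rw [lcp_comm]
      exact lcp_lt_case v u p n m hp hlB hgt hnv hmu.le hv hu hB
        (by rwa [lcp_comm])
  · intro heq
    have hag := agree u v p m n hp hlce' hu hv
    have htake : u.take m = v.take m :=
      take_eq_of_agree hmu.le (by omega) (fun k hk => hag k hk (by omega))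
    show lcp u v = m + LCE w dA dB
    rw [lcp_eq_add m u v hmu.le htake]
    congr 1
    have h1 : u.drop m = w.drop dA := by
      rw [hu_def, List.drop_drop, show a' + m = dA by omega]
    have h2 : v.drop m = w.drop dB := by
      rw [hv_def, List.drop_drop, show b' + m = dB by omega]
    rw [h1, h2]
    rfl
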